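/- arXiv:1111.0241 — 5 statements merged into one kernel-verified Lean document; each statement's English description precedes it below -/
import Mathlib

section
/- Let f : ℕ → ℝ, and suppose the sequences of quasiperiodic functions (c_r)_{r≥0} and (c′_r)_{r≥0} are both a.p.p.s. expansions of f. Then c_r(n) = c′_r(n) for every integer r ≥ 0 and every positive integer n. -/
/-!
Subtracting the two expansions gives an expansion `d` of `0`. If `d 0, …, d (r - 1)` vanish at
the positive integers, the bound of order `r + 1` reads `|d r n| ≤ C / n`, so `d r n → 0`.
On `ℕ` a quasiperiodic function is `n ↦ F (n • x)` for a continuous `F` on a torus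
`(ℝ/ℤ)ᵏ`, and in a compact group the multiples `m • x` come back arbitrarily close to `0` for
arbitrarily large `m`. Hence `d r n = lim d r (n + mⱼ) = 0`.
-/

/-- A function `ℝ → ℝ` is quasiperiodic if it is a sum of finitely many
continuous periodic functions. -/
def Quasiperiodic (ω : ℝ → ℝ) : Prop :=
  ∃ (k : ℕ) (f : Fin k → ℝ → ℝ) (p : Fin k → ℝ),
    (∀ i, Continuous (f i)) ∧ (∀ i, 0 < p i ∧ Function.Periodic (f i) (p i)) ∧
    ω = fun t => ∑ i, f i t

/-- `c` is an asymptotic pseudo-power series (a.p.p.s.) expansion of `f`. -/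
def IsAPPS (f : ℕ → ℝ) (c : ℕ → ℝ → ℝ) : Prop :=
  (∀ r, Quasiperiodic (c r)) ∧
  ∀ k : ℕ, 1 ≤ k → ∃ C : ℝ, ∀ n : ℕ, 1 ≤ n →
    |f n - ∑ r ∈ Finset.range k, c r n / (n : ℝ) ^ r| ≤ C / (n : ℝ) ^ k

open Filter Topology Finset

theorem exists_tendsto_atTop_nsmul_tendsto_zero {G : Type*} [AddGroup G] [TopologicalSpace G]
    [IsTopologicalAddGroup G] [SeqCompactSpace G] (x : G) :
    ∃ m : ℕ → ℕ, Tendsto m atTop atTop ∧ Tendsto (fun j ↦ m j • x) atTop (𝓝 0) := by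
  obtain ⟨a, φ, hφ, ha⟩ := SeqCompactSpace.tendsto_subseq fun n : ℕ ↦ n • x
  refine ⟨fun j ↦ φ (j + j) - φ j, tendsto_atTop_mono (fun j ↦ ?_) tendsto_id, ?_⟩
  · have := hφ.add_le_nat j j
    change j ≤ φ (j + j) - φ j
    omega
  · have hsub : ∀ j, (φ (j + j) - φ j) • x = φ (j + j) • x - φ j • x := fun j ↦ by
      rw [sub_nsmul x (hφ.monotone (Nat.le_add_left j j)), sub_eq_add_neg]
    simp_rw [hsub]
    simpa using (ha.comp (strictMono_id.add strictMono_id).tendsto_atTop).sub ha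

theorem Quasiperiodic.exists_continuous_nsmul_eq {ω : ℝ → ℝ} (hω : Quasiperiodic ω) :
    ∃ (k : ℕ) (F : (Fin k → UnitAddCircle) → ℝ) (x : Fin k → UnitAddCircle),
      Continuous F ∧ ∀ n : ℕ, ω n = F (n • x) := by
  obtain ⟨k, f, p, hf, hp, rfl⟩ := hω
  have hper : ∀ i, Function.Periodic (fun t ↦ f i (p i * t)) 1 := fun i t ↦ by
    simpa [mul_add] using (hp i).2 (p i * t)
  have hlift : ∀ i, Continuous (hper i).lift := fun i ↦
    continuous_coinduced_dom.mpr ((hf i).comp (continuous_const_mul _))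
  refine ⟨k, fun y ↦ ∑ i, (hper i).lift (y i), fun i ↦ ((p i)⁻¹ : ℝ), ?_, fun n ↦ ?_⟩
  · exact continuous_finsetSum _ fun i _ ↦ (hlift i).comp (continuous_apply i)
  · refine sum_congr rfl fun i _ ↦ ?_
    rw [Pi.smul_apply, ← AddCircle.coe_nsmul, Function.Periodic.lift_coe, nsmul_eq_mul,
      mul_comm (n : ℝ), mul_inv_cancel_left₀ (hp i).1.ne']

theorem Quasiperiodic.natCast_eq_zero_of_tendsto {ω : ℝ → ℝ} (hω : Quasiperiodic ω)
    (h : Tendsto (fun n : ℕ ↦ ω n) atTop (𝓝 0)) (n : ℕ) : ω n = 0 := by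
  obtain ⟨k, F, x, hF, hωF⟩ := hω.exists_continuous_nsmul_eq
  obtain ⟨m, hm, hmx⟩ := exists_tendsto_atTop_nsmul_tendsto_zero x
  have hshift : Tendsto (fun j ↦ ω ↑(n + m j)) atTop (𝓝 0) :=
    h.comp (tendsto_atTop_mono (fun j ↦ Nat.le_add_left _ _) hm)
  refine tendsto_nhds_unique ?_ hshift
  simp_rw [hωF, add_nsmul]
  simpa [Function.comp_def] using (hF.tendsto _).comp (tendsto_const_nhds.add hmx)

theorem Quasiperiodic.sub {ω ω' : ℝ → ℝ} (h : Quasiperiodic ω) (h' : Quasiperiodic ω') :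
    Quasiperiodic (ω - ω') := by
  obtain ⟨k, f, p, hf, hp, rfl⟩ := h
  obtain ⟨k', f', p', hf', hp', rfl⟩ := h'
  refine ⟨k + k', Fin.addCases f (fun i ↦ -f' i), Fin.addCases p p', ?_, ?_, ?_⟩
  · exact Fin.addCases (fun i ↦ by simpa using hf i) (fun i ↦ by simpa using (hf' i).neg)
  · refine Fin.addCases (fun i ↦ ?_) (fun i ↦ ?_)
    · simpa using hp i
    · simpa using ⟨(hp' i).1, fun t ↦ by simp [(hp' i).2 t]⟩
  · funext t
    simp [Fin.sum_univ_add, sub_eq_add_neg]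

theorem IsAPPS.sub {f g : ℕ → ℝ} {c c' : ℕ → ℝ → ℝ} (h : IsAPPS f c) (h' : IsAPPS g c') :
    IsAPPS (f - g) (c - c') := by
  refine ⟨fun r ↦ (h.1 r).sub (h'.1 r), fun k hk ↦ ?_⟩
  obtain ⟨C, hC⟩ := h.2 k hk
  obtain ⟨C', hC'⟩ := h'.2 k hk
  refine ⟨C + C', fun n hn ↦ ?_⟩
  have hsplit : (f - g) n - ∑ r ∈ range k, (c - c') r n / (n : ℝ) ^ r
      = (f n - ∑ r ∈ range k, c r n / (n : ℝ) ^ r)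
        - (g n - ∑ r ∈ range k, c' r n / (n : ℝ) ^ r) := by
    simp only [Pi.sub_apply, sub_div, sum_sub_distrib]
    ring
  rw [hsplit, add_div]
  exact (abs_sub _ _).trans (add_le_add (hC n hn) (hC' n hn))

theorem IsAPPS.natCast_eq_zero {c : ℕ → ℝ → ℝ} (h : IsAPPS 0 c) (r n : ℕ) : c r n = 0 := by
  induction r using Nat.strong_induction_on generalizing n with
  | _ r ih =>
    refine (h.1 r).natCast_eq_zero_of_tendsto ?_ n
    obtain ⟨C, hC⟩ := h.2 (r + 1) r.succ_pos
    have hbound : ∀ m : ℕ, 1 ≤ m → |c r m| ≤ C / m := fun m hm ↦ by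
      have hm' : (0 : ℝ) < m := by exact_mod_cast hm
      have := hC m hm
      rwa [sum_range_succ, sum_eq_zero fun j hj ↦ by rw [ih j (mem_range.mp hj) m, zero_div],
        Pi.zero_apply, zero_add, zero_sub, abs_neg, abs_div, abs_of_pos (pow_pos hm' r),
        pow_succ, ← div_div, div_right_comm C, div_le_div_iff_of_pos_right (pow_pos hm' r)] at this
    refine squeeze_zero_norm' ?_ (tendsto_const_div_atTop_nhds_zero_nat C)
    filter_upwards [eventually_ge_atTop 1] with m hm
    exact hbound m hm

theorem stmt2 (f : ℕ → ℝ) (c c' : ℕ → ℝ → ℝ)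
    (h : IsAPPS f c) (h' : IsAPPS f c') :
    ∀ r : ℕ, ∀ n : ℕ, 1 ≤ n → c r n = c' r n := by
  intro r n _
  have hzero : IsAPPS 0 (c - c') := sub_self f ▸ h.sub h'
  exact sub_eq_zero.mp (hzero.natCast_eq_zero r n)
end

section
/- Let a < b be real numbers and let f be holomorphic on an open set containing {exp(it) : t ∈ [a,b]}. Suppose |f(exp(it))| ≤ 1 for all t ∈ [a,b], with equality for only finitely many t ∈ [a,b]. Then there exists δ > 0 such that for every integer k ≥ 0 there is a constant C_k with ∫_a^b |(H_k^m f)(exp(it))| dt ≤ C_k·m^{k−δ} for all positive integers m. -/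
/-!
Write `θ = z d/dz` and `φ t = ‖f (exp (i t))‖`. Expanding `θ^k (f^m)` by the product rule gives a
sum of terms `c(m) g f^(m-j)` with `g` holomorphic, `j ≤ k` and `|c(m)| ≤ m^k`, so on the arc
`|θ^k (f^m)| ≤ D m^k φ^(m-k)`. The function `1 - φ²` is real-analytic with finitely many zeros on
`[a, b]`, so by compactness there are finitely many centers and an exponent `N` such that each
`t` has a center `t₀` with `1 - φ t ≥ c |t - t₀|^N`. Then `φ^n ≤ s / c` outside the `s`-neighbourhoods of the centers for
`s = (n + 1)^(-1/(N+1))`, whence `∫ φ^n = O(n^(-1/(N+1)))`.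
-/

open MeasureTheory

/-- `Hop k g` is the result of applying the operator `g ↦ (z ↦ z·g′(z))` `k` times to `g`. -/
noncomputable def Hop (k : ℕ) (g : ℂ → ℂ) : ℂ → ℂ :=
  (fun h : ℂ → ℂ => fun z => z * deriv h z)^[k] g

open Set Filter Topology

theorem Hop_succ (k : ℕ) (g : ℂ → ℂ) : Hop (k + 1) g = fun z => z * deriv (Hop k g) z :=
  Function.iterate_succ_apply' _ _ _

section Holomorphic

variable {V : Set ℂ} {f : ℂ → ℂ}

theorem DifferentiableOn.Hop (hV : IsOpen V) (hf : DifferentiableOn ℂ f V) (k : ℕ) :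
    DifferentiableOn ℂ (Hop k f) V := by
  induction k with
  | zero => exact hf
  | succ k ih =>
    rw [Hop_succ]
    exact differentiableOn_id.mul (ih.deriv hV)

theorem exists_Hop_pow_eq_sum (hV : IsOpen V) (hf : DifferentiableOn ℂ f V) (k : ℕ) :
    ∃ (ι : Type) (_ : Fintype ι) (c : ι → ℕ → ℂ) (g : ι → ℂ → ℂ) (j : ι → ℕ),
      (∀ i, DifferentiableOn ℂ (g i) V) ∧ (∀ i, j i ≤ k) ∧
      (∀ i m, 1 ≤ m → ‖c i m‖ ≤ (m : ℝ) ^ k) ∧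
      ∀ m, ∀ z ∈ V, Hop k (fun w => f w ^ m) z = ∑ i, c i m * g i z * f z ^ (m - j i) := by
  induction k with
  | zero => exact ⟨Unit, inferInstance, fun _ _ => 1, fun _ _ => 1, fun _ => 0, by simp [Hop]⟩
  | succ k ih =>
    obtain ⟨ι, _, c, g, j, hg, hj, hc, hrep⟩ := ih
    -- `z (c g f^(m-j))' = c (z g') f^(m-j) + c (m-j) (z g f') f^(m-j-1)`
    refine ⟨ι ⊕ ι, inferInstance, Sum.elim c fun i m => c i m * (m - j i : ℕ),
      Sum.elim (fun i z => z * deriv (g i) z) (fun i z => z * (g i z * deriv f z)),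
      Sum.elim j (fun i => j i + 1), ?_, ?_, ?_, ?_⟩
    · rintro (i | i)
      · exact differentiableOn_id.mul ((hg i).deriv hV)
      · exact differentiableOn_id.mul ((hg i).mul (hf.deriv hV))
    · rintro (i | i) <;> simp [hj i, Nat.le_succ_of_le]
    · rintro (i | i) m hm
      · exact (hc i m hm).trans (pow_le_pow_right₀ (by exact_mod_cast hm) k.le_succ)
      · rw [Sum.elim_inr, norm_mul, pow_succ, Complex.norm_natCast]
        gcongr
        exacts [hc i m hm, Nat.sub_le m (j i)]
    · intro m z hz
      have hderiv : ∀ i, HasDerivAt (fun w => c i m * g i w * f w ^ (m - j i))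
          (c i m * deriv (g i) z * f z ^ (m - j i) +
            c i m * g i z * ((m - j i : ℕ) * f z ^ (m - j i - 1) * deriv f z)) z := by
        intro i
        have hgi := ((hg i).differentiableAt (hV.mem_nhds hz)).hasDerivAt
        have hfz := (hf.differentiableAt (hV.mem_nhds hz)).hasDerivAt
        exact ((hgi.const_mul (c i m)).mul (hfz.fun_pow _)).congr_deriv (by ring)
      have hev : Hop k (fun w => f w ^ m) =ᶠ[nhds z]
          fun w => ∑ i, c i m * g i w * f w ^ (m - j i) :=
        Filter.eventually_of_mem (hV.mem_nhds hz) (hrep m)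
      rw [Hop_succ]
      dsimp only
      rw [hev.deriv_eq, (HasDerivAt.fun_sum fun i _ => hderiv i).deriv,
        Fintype.sum_sum_type, Finset.mul_sum, ← Finset.sum_add_distrib]
      refine Finset.sum_congr rfl fun i _ => ?_
      simp only [Sum.elim_inl, Sum.elim_inr, Nat.sub_sub]
      ring

theorem exists_norm_Hop_pow_le (hV : IsOpen V) (hf : DifferentiableOn ℂ f V) {K : Set ℂ}
    (hK : IsCompact K) (hKV : K ⊆ V) (k : ℕ) :
    ∃ D ≥ 0, ∀ m, 1 ≤ m → ∀ z ∈ K, ‖f z‖ ≤ 1 →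
      ‖Hop k (fun w => f w ^ m) z‖ ≤ D * m ^ k * ‖f z‖ ^ (m - k) := by
  obtain ⟨ι, _, c, g, j, hg, hj, hc, hrep⟩ := exists_Hop_pow_eq_sum hV hf k
  choose B hB using fun i => hK.exists_bound_of_continuousOn ((hg i).continuousOn.mono hKV)
  refine ⟨∑ i, |B i|, by positivity, fun m hm z hz hfz => ?_⟩
  rw [hrep m z (hKV hz), Finset.sum_mul, Finset.sum_mul]
  refine (norm_sum_le _ _).trans (Finset.sum_le_sum fun i _ => ?_)
  rw [norm_mul, norm_mul, norm_pow]
  calc ‖c i m‖ * ‖g i z‖ * ‖f z‖ ^ (m - j i) ≤ ‖c i m‖ * ‖g i z‖ * ‖f z‖ ^ (m - k) :=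
        mul_le_mul_of_nonneg_left
          (pow_le_pow_of_le_one (norm_nonneg _) hfz (Nat.sub_le_sub_left (hj i) m)) (by positivity)
    _ ≤ m ^ k * |B i| * ‖f z‖ ^ (m - k) := by
        gcongr
        exacts [hc i m hm, (hB i z hz).trans (le_abs_self _)]
    _ = |B i| * m ^ k * ‖f z‖ ^ (m - k) := by ring

end Holomorphic

theorem AnalyticAt.exists_mul_pow_le_norm {𝕜 E : Type*} [NontriviallyNormedField 𝕜]
    [NormedAddCommGroup E] [NormedSpace 𝕜 E] {h : 𝕜 → E} {x : 𝕜} (hh : AnalyticAt 𝕜 h x)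
    (hord : analyticOrderAt h x ≠ ⊤) :
    ∃ c > 0, ∃ n : ℕ, ∀ᶠ t in 𝓝 x, c * ‖t - x‖ ^ n ≤ ‖h t‖ := by
  obtain ⟨g, hg, hgx, hev⟩ := hh.analyticOrderAt_ne_top.mp hord
  have hgt : ∀ᶠ t in 𝓝 x, ‖g x‖ / 2 < ‖g t‖ :=
    hg.continuousAt.norm.eventually (lt_mem_nhds (half_lt_self (norm_pos_iff.mpr hgx)))
  refine ⟨‖g x‖ / 2, by positivity, analyticOrderNatAt h x, ?_⟩
  filter_upwards [hev, hgt] with t hht hgt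
  rw [hht, norm_smul, norm_pow, mul_comm]
  gcongr

theorem analyticOrderAt_ne_top_of_finite_zeros {E : Type*} [NormedAddCommGroup E]
    [NormedSpace ℝ E] {ψ : ℝ → E} {a b x : ℝ} (hab : a < b)
    (hx : x ∈ Icc a b) (hfin : {t ∈ Icc a b | ψ t = 0}.Finite) : analyticOrderAt ψ x ≠ ⊤ := by
  rw [Ne, analyticOrderAt_eq_top, Metric.eventually_nhds_iff_ball]
  rintro ⟨ε, hε, hzero⟩
  have hinf : (Ioo a b ∩ Metric.ball x ε).Infinite := by
    rw [Real.ball_eq_Ioo, Ioo_inter_Ioo]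
    exact Ioo_infinite (max_lt (lt_min hab (by linarith [hx.1])) (lt_min (by linarith [hx.2])
      (by linarith)))
  exact hinf (hfin.subset fun t ht => ⟨Ioo_subset_Icc_self ht.1, hzero t ht.2⟩)

theorem exists_mul_pow_le_norm_of_finite_zeros {E : Type*} [NormedAddCommGroup E]
    [NormedSpace ℝ E] {ψ : ℝ → E} {a b : ℝ} (hab : a < b)
    (hψ : ∀ t ∈ Icc a b, AnalyticAt ℝ ψ t) (hfin : {t ∈ Icc a b | ψ t = 0}.Finite) :
    ∃ N : ℕ, ∃ c > 0, c ≤ 1 ∧ ∃ T : Finset ℝ,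
      ∀ t ∈ Icc a b, ∃ t₀ ∈ T, c * |t - t₀| ^ N ≤ ‖ψ t‖ := by
  -- the bound near a single center survives raising `N`, as long as `|t - t₀| ≤ 1`
  let P : Set ℝ → Prop := fun s => ∃ N : ℕ, ∃ c > 0, c ≤ 1 ∧ ∃ T : Finset ℝ,
    ∀ t ∈ s, ∃ t₀ ∈ T, |t - t₀| ≤ 1 ∧ c * |t - t₀| ^ N ≤ ‖ψ t‖
  suffices P (Icc a b) by
    obtain ⟨N, c, hc, hc1, T, hT⟩ := this
    exact ⟨N, c, hc, hc1, T, fun t ht => (hT t ht).imp fun t₀ ⟨h, _, hle⟩ => ⟨h, hle⟩⟩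
  refine isCompact_Icc.induction_on ⟨0, 1, one_pos, le_rfl, ∅, by simp⟩ ?_ ?_ ?_
  · rintro s s' hss' ⟨N, c, hc, hc1, T, hT⟩
    exact ⟨N, c, hc, hc1, T, fun t ht => hT t (hss' ht)⟩
  · rintro s s' ⟨N, c, hc, hc1, T, hT⟩ ⟨N', c', hc', hc1', T', hT'⟩
    refine ⟨max N N', min c c', lt_min hc hc', min_le_of_left_le hc1, T ∪ T', ?_⟩
    rintro t (ht | ht)
    · obtain ⟨t₀, h₀, h1, hle⟩ := hT t ht
      refine ⟨t₀, Finset.mem_union_left _ h₀, h1, le_trans ?_ hle⟩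
      exact mul_le_mul (min_le_left _ _)
        (pow_le_pow_of_le_one (abs_nonneg _) h1 (le_max_left _ _)) (by positivity) hc.le
    · obtain ⟨t₀, h₀, h1, hle⟩ := hT' t ht
      refine ⟨t₀, Finset.mem_union_right _ h₀, h1, le_trans ?_ hle⟩
      exact mul_le_mul (min_le_right _ _)
        (pow_le_pow_of_le_one (abs_nonneg _) h1 (le_max_right _ _)) (by positivity) hc'.le
  · intro x hx
    obtain ⟨c, hc, n, hev⟩ := (hψ x hx).exists_mul_pow_le_norm
      (analyticOrderAt_ne_top_of_finite_zeros hab hx hfin)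
    refine ⟨_, mem_nhdsWithin_of_mem_nhds (hev.and (Metric.closedBall_mem_nhds x one_pos)),
      n, min c 1, lt_min hc one_pos, min_le_right _ _, {x}, fun t ⟨hle, ht⟩ => ⟨x, by simp, ?_, ?_⟩⟩
    · simpa [Real.dist_eq] using ht
    · exact (mul_le_mul_of_nonneg_right (min_le_left _ _) (by positivity)).trans (by simpa using hle)

theorem AnalyticAt.norm_sq_ofReal {g : ℂ → ℂ} {x : ℝ} (hg : AnalyticAt ℂ g x) :
    AnalyticAt ℝ (fun t : ℝ => ‖g t‖ ^ 2) x := by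
  simp only [Complex.sq_norm, Complex.normSq_apply]
  have := hg.re_ofReal
  have := hg.im_ofReal
  fun_prop

theorem pow_mul_one_add_mul_le_one {x y : ℝ} (hx : 0 ≤ x) (hy : 0 ≤ y) (hyx : y ≤ 1 - x)
    (n : ℕ) : y ^ n * (1 + n * x) ≤ 1 :=
  calc y ^ n * (1 + n * x) ≤ (1 - x) ^ n * (1 + x) ^ n :=
        mul_le_mul (pow_le_pow_left₀ hy hyx n) (one_add_mul_le_pow (by linarith) n)
          (by positivity) (pow_nonneg (by linarith) n)
    _ = (1 - x ^ 2) ^ n := by rw [← mul_pow]; ring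
    _ ≤ 1 := pow_le_one₀ (by nlinarith) (by nlinarith)

theorem integral_pow_le_of_le_one_sub_mul_pow {φ : ℝ → ℝ} {a b c : ℝ} {N : ℕ} {T : Finset ℝ}
    (hab : a ≤ b) (hφ : ContinuousOn φ (Icc a b)) (hφ0 : ∀ t ∈ Icc a b, 0 ≤ φ t)
    (hc : 0 < c) (hc1 : c ≤ 1) (hT : ∀ t ∈ Icc a b, ∃ t₀ ∈ T, φ t ≤ 1 - c * |t - t₀| ^ N)
    (n : ℕ) :
    ∫ t in a..b, φ t ^ n ≤ (2 * T.card + (b - a) / c) * ((n : ℝ) + 1) ^ (-(1 / ((N : ℝ) + 1))) := by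
  set s := ((n : ℝ) + 1) ^ (-(1 / ((N : ℝ) + 1))) with hs_def
  have hs0 : 0 < s := by positivity
  have hs1 : s ≤ 1 := Real.rpow_le_one_of_one_le_of_nonpos (by linarith [n.cast_nonneg (α := ℝ)])
    (by simp only [Left.neg_nonpos_iff]; positivity)
  have hsN : s ^ (N + 1) * (n + 1) = 1 := by
    rw [hs_def, ← Real.rpow_natCast, ← Real.rpow_mul (by positivity), Nat.cast_succ,
      neg_mul, one_div_mul_cancel (by positivity), Real.rpow_neg_one, inv_mul_cancel₀ (by positivity)]
  -- with Bernoulli's inequality this bounds `φ t ^ n` by `s / c` at distance `> s` from the center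
  have hcs : c ≤ (1 + n * (c * s ^ N)) * s :=
    calc c = c * s ^ (N + 1) + n * (c * s ^ N) * s := by linear_combination -c * hsN
      _ ≤ 1 * s + n * (c * s ^ N) * s := by
          gcongr
          exact pow_le_of_le_one hs0.le hs1 N.succ_ne_zero
      _ = (1 + n * (c * s ^ N)) * s := by ring
  set A := ⋃ t₀ ∈ T, Icc (t₀ - s) (t₀ + s)
  have hpt : ∀ t ∈ Icc a b, φ t ^ n ≤ A.indicator (1 : ℝ → ℝ) t + s / c := by
    intro t ht
    obtain ⟨t₀, ht₀, hle⟩ := hT t ht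
    have hx : 0 ≤ c * |t - t₀| ^ N := by positivity
    have hind : 0 ≤ A.indicator (1 : ℝ → ℝ) t := indicator_nonneg (fun _ _ => zero_le_one' ℝ) t
    by_cases hnear : |t - t₀| ≤ s
    · have hA : t ∈ A := mem_biUnion ht₀ (by constructor <;> linarith [abs_le.mp hnear])
      rw [indicator_of_mem hA, Pi.one_apply]
      linarith [pow_le_one₀ (n := n) (hφ0 t ht) (by linarith), div_pos hs0 hc]
    · have hsx : c * s ^ N ≤ c * |t - t₀| ^ N := by gcongr; linarith
      have hφn : φ t ^ n * c ≤ s :=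
        calc φ t ^ n * c ≤ φ t ^ n * (1 + n * (c * |t - t₀| ^ N)) * s := by
              rw [mul_assoc]
              gcongr
              · exact pow_nonneg (hφ0 t ht) n
              · exact hcs.trans (by gcongr)
          _ ≤ 1 * s := by gcongr; exact pow_mul_one_add_mul_le_one hx (hφ0 t ht) hle n
          _ = s := one_mul s
      linarith [(le_div_iff₀ hc).mpr hφn]
  have hA : MeasurableSet A := Finset.measurableSet_biUnion T fun _ _ => measurableSet_Icc
  have hA_fin : volume A ≠ ⊤ := ((measure_biUnion_finset_le T _).trans_lt
    (ENNReal.sum_lt_top.mpr fun _ _ => measure_Icc_lt_top)).ne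
  have hint : IntegrableOn (fun t => φ t ^ n) (Ioc a b) :=
    ((hφ.pow n).integrableOn_compact isCompact_Icc).mono_set Ioc_subset_Icc_self
  have hint_ind : IntegrableOn (A.indicator (1 : ℝ → ℝ)) (Ioc a b) :=
    (integrableOn_const measure_Ioc_lt_top.ne).indicator hA
  rw [intervalIntegral.integral_of_le hab]
  calc ∫ t in Ioc a b, φ t ^ n ≤ ∫ t in Ioc a b, (A.indicator 1 t + s / c) :=
        setIntegral_mono_on hint (hint_ind.add (integrableOn_const measure_Ioc_lt_top.ne))
          measurableSet_Ioc fun t ht => hpt t (Ioc_subset_Icc_self ht)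
    _ = volume.real (A ∩ Ioc a b) + (b - a) * (s / c) := by
        rw [integral_add hint_ind (integrableOn_const measure_Ioc_lt_top.ne),
          integral_indicator_one hA, measureReal_restrict_apply hA, setIntegral_const,
          Real.volume_real_Ioc_of_le hab, smul_eq_mul]
    _ ≤ ∑ t₀ ∈ T, volume.real (Icc (t₀ - s) (t₀ + s)) + (b - a) * (s / c) := by
        gcongr
        exact (measureReal_mono inter_subset_left hA_fin).trans (measureReal_biUnion_finset_le _ _)
    _ = (2 * T.card + (b - a) / c) * s := by
        have hIcc : ∀ t₀ : ℝ, volume.real (Icc (t₀ - s) (t₀ + s)) = 2 * s := fun t₀ => by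
          rw [Real.volume_real_Icc_of_le (by linarith)]; ring
        simp only [hIcc, Finset.sum_const, nsmul_eq_mul]
        ring

theorem exists_integral_pow_le_rpow_neg {φ : ℝ → ℝ} {a b : ℝ} (hab : a < b)
    (hφ : ContinuousOn φ (Icc a b)) (hφ0 : ∀ t ∈ Icc a b, 0 ≤ φ t)
    (hφ1 : ∀ t ∈ Icc a b, φ t ≤ 1) (hψ : ∀ t ∈ Icc a b, AnalyticAt ℝ (fun s => 1 - φ s ^ 2) t)
    (hfin : {t ∈ Icc a b | φ t = 1}.Finite) :
    ∃ δ > (0 : ℝ), ∃ C ≥ 0, ∀ n : ℕ, ∫ t in a..b, φ t ^ n ≤ C * ((n : ℝ) + 1) ^ (-δ) := by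
  have hzeros : {t ∈ Icc a b | 1 - φ t ^ 2 = 0}.Finite := hfin.subset fun t ⟨ht, h0⟩ =>
    ⟨ht, by nlinarith [hφ0 t ht, hφ1 t ht]⟩
  obtain ⟨N, c, hc, hc1, T, hT⟩ := exists_mul_pow_le_norm_of_finite_zeros hab hψ hzeros
  -- `1 - φ ^ 2 ≤ 2 (1 - φ)`
  have hT' : ∀ t ∈ Icc a b, ∃ t₀ ∈ T, φ t ≤ 1 - c / 2 * |t - t₀| ^ N := fun t ht =>
    (hT t ht).imp fun t₀ ⟨h₀, hle⟩ => ⟨h₀, by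
      rw [Real.norm_eq_abs, abs_of_nonneg (a := 1 - φ t ^ 2) (by nlinarith [hφ0 t ht, hφ1 t ht])] at hle
      nlinarith [sq_nonneg (1 - φ t)]⟩
  exact ⟨1 / ((N : ℝ) + 1), by positivity, _, by have := hab.le; positivity,
    integral_pow_le_of_le_one_sub_mul_pow hab.le hφ hφ0 (half_pos hc) (by linarith) hT'⟩

theorem natCast_pow_mul_rpow_neg_le {k m : ℕ} (hm : 1 ≤ m) {δ : ℝ} (hδ : 0 ≤ δ) :
    (m : ℝ) ^ k * (((m - k : ℕ) : ℝ) + 1) ^ (-δ) ≤ ((k : ℝ) + 1) ^ δ * (m : ℝ) ^ ((k : ℝ) - δ) := by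
  have hm0 : (0 : ℝ) < m := by exact_mod_cast hm
  have hle : (m : ℝ) / (k + 1) ≤ ((m - k : ℕ) : ℝ) + 1 := by
    rw [div_le_iff₀ (by positivity)]
    -- also when `m - k` truncates to `0`
    have : m ≤ (m - k + 1) * (k + 1) := by
      rcases le_total m k with h | h
      · rw [Nat.sub_eq_zero_of_le h]; omega
      · obtain ⟨d, rfl⟩ := Nat.exists_eq_add_of_le h
        rw [Nat.add_sub_cancel_left]; nlinarith
    exact_mod_cast this
  calc (m : ℝ) ^ k * (((m - k : ℕ) : ℝ) + 1) ^ (-δ)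
      ≤ (m : ℝ) ^ k * ((m : ℝ) / (k + 1)) ^ (-δ) := mul_le_mul_of_nonneg_left
        (Real.rpow_le_rpow_of_nonpos (by positivity) hle (neg_nonpos.mpr hδ)) (by positivity)
    _ = ((k : ℝ) + 1) ^ δ * (m : ℝ) ^ ((k : ℝ) - δ) := by
        rw [Real.div_rpow hm0.le (by positivity), Real.rpow_neg (by positivity : (0 : ℝ) ≤ k + 1),
          div_inv_eq_mul, Real.rpow_sub hm0, Real.rpow_neg hm0.le, Real.rpow_natCast]
        ring

theorem stmt11 (a b : ℝ) (hab : a < b) (f : ℂ → ℂ) (V : Set ℂ) (hV : IsOpen V)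
    (hVc : ∀ t ∈ Set.Icc a b, Complex.exp (Complex.I * t) ∈ V)
    (hf : DifferentiableOn ℂ f V)
    (hle : ∀ t ∈ Set.Icc a b, ‖f (Complex.exp (Complex.I * t))‖ ≤ 1)
    (hfin : {t ∈ Set.Icc a b | ‖f (Complex.exp (Complex.I * t))‖ = 1}.Finite) :
    ∃ δ > (0 : ℝ), ∀ k : ℕ, ∃ C : ℝ, ∀ m : ℕ, 1 ≤ m →
      (∫ t in a..b,
          ‖Hop k (fun z => f z ^ m) (Complex.exp (Complex.I * t))‖)
        ≤ C * (m : ℝ) ^ ((k : ℝ) - δ) := by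
  set γ : ℝ → ℂ := fun t => Complex.exp (Complex.I * t)
  have hγ : Continuous γ := by fun_prop
  have hψ : ∀ t ∈ Icc a b, AnalyticAt ℝ (fun s => 1 - ‖f (γ s)‖ ^ 2) t := fun t ht =>
    analyticAt_const.sub (AnalyticAt.norm_sq_ofReal <| (hf.analyticOnNhd hV _ (hVc t ht)).comp
      (f := fun w : ℂ => Complex.exp (Complex.I * w)) (by fun_prop))
  obtain ⟨δ, hδ, C, hC0, hC⟩ := exists_integral_pow_le_rpow_neg hab
    (hf.continuousOn.comp hγ.continuousOn hVc).norm (fun _ _ => norm_nonneg _) hle hψ hfin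
  refine ⟨δ, hδ, fun k => ?_⟩
  obtain ⟨D, hD, hHop⟩ := exists_norm_Hop_pow_le hV hf (isCompact_Icc.image hγ)
    (image_subset_iff.mpr hVc) k
  refine ⟨D * C * ((k : ℝ) + 1) ^ δ, fun m hm => ?_⟩
  have hHop_cont : ContinuousOn (fun t => ‖Hop k (fun z => f z ^ m) (γ t)‖) (Icc a b) :=
    ((hf.pow m).Hop hV k).continuousOn.comp hγ.continuousOn hVc |>.norm
  calc ∫ t in a..b, ‖Hop k (fun z => f z ^ m) (γ t)‖
      ≤ ∫ t in a..b, D * m ^ k * ‖f (γ t)‖ ^ (m - k) := by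
        refine intervalIntegral.integral_mono_on hab.le
          (hHop_cont.intervalIntegrable_of_Icc hab.le) ?_
          fun t ht => hHop m hm (γ t) (mem_image_of_mem γ ht) (hle t ht)
        exact (continuousOn_const.mul ((hf.continuousOn.comp hγ.continuousOn hVc).norm.pow _))
          |>.intervalIntegrable_of_Icc hab.le
    _ = D * (m ^ k * ∫ t in a..b, ‖f (γ t)‖ ^ (m - k)) := by
        rw [intervalIntegral.integral_const_mul, mul_assoc]
    _ ≤ D * (m ^ k * (C * (((m - k : ℕ) : ℝ) + 1) ^ (-δ))) := by gcongr; exact hC _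
    _ = D * C * ((m : ℝ) ^ k * (((m - k : ℕ) : ℝ) + 1) ^ (-δ)) := by ring
    _ ≤ D * C * (((k : ℝ) + 1) ^ δ * (m : ℝ) ^ ((k : ℝ) - δ)) :=
        mul_le_mul_of_nonneg_left (natCast_pow_mul_rpow_neg_le hm hδ.le) (by positivity)
    _ = D * C * ((k : ℝ) + 1) ^ δ * (m : ℝ) ^ ((k : ℝ) - δ) := by ring
end

section
/- Let k ≥ 0 be an integer, S ⊂ ℂ a compact set, and f holomorphic on an open set U ⊇ S. Then there exists a constant C such that for every positive integer m and every z ∈ S with f(z) ≠ 0, |(H_k^m f)(z)| ≤ C·mᵏ·|f(z)|^{m−k}. -/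
/-!
By induction on `k`, `H_k(f^m) = ∑ᵢ m(m-1)⋯(m-jᵢ+1) · cᵢ · f^(m-jᵢ)` on `U`, with finitely
many holomorphic coefficients `cᵢ` and exponents `jᵢ ≤ k` independent of `m`: differentiating
`f^(m-j)` produces the factor `m - j`, which turns `m.descFactorial j` into
`m.descFactorial (j+1)`. On the compact set `S` the `cᵢ` and `f` are bounded,
`m.descFactorial j ≤ mᵏ`, and
`‖f‖^(m-j) = ‖f‖^(k-j) ‖f‖^(m-k) ≤ (max 1 ‖f‖_S)ᵏ ‖f‖^(m-k)`.
-/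

lemma Hop_succ_apply (k : ℕ) (g : ℂ → ℂ) (z : ℂ) :
    Hop (k + 1) g z = z * deriv (Hop k g) z := by
  simp only [Hop, Function.iterate_succ_apply']

lemma hasDerivAt_descFactorial_mul_mul_pow {c f : ℂ → ℂ} {z : ℂ}
    (hc : DifferentiableAt ℂ c z) (hf : DifferentiableAt ℂ f z) (m j : ℕ) :
    HasDerivAt (fun w => (m.descFactorial j : ℂ) * c w * f w ^ (m - j))
      ((m.descFactorial j : ℂ) * deriv c z * f z ^ (m - j)
        + (m.descFactorial (j + 1) : ℂ) * (c z * deriv f z) * f z ^ (m - (j + 1))) z := by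
  refine ((hc.hasDerivAt.const_mul _).mul (hf.hasDerivAt.fun_pow _)).congr_deriv ?_
  rw [Nat.descFactorial_succ, Nat.sub_sub]
  push_cast
  ring

lemma Hop_pow_eq_sum {U : Set ℂ} (hU : IsOpen U) {f : ℂ → ℂ} (hf : DifferentiableOn ℂ f U)
    (k : ℕ) :
    ∃ (n : ℕ) (j : Fin n → ℕ) (c : Fin n → ℂ → ℂ),
      (∀ i, j i ≤ k) ∧ (∀ i, DifferentiableOn ℂ (c i) U) ∧
      ∀ m, ∀ z ∈ U, Hop k (fun w => f w ^ m) z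
        = ∑ i, (m.descFactorial (j i) : ℂ) * c i z * f z ^ (m - j i) := by
  induction k with
  | zero => exact ⟨1, fun _ => 0, fun _ _ => 1, by simp, fun _ => differentiableOn_const 1,
      by simp [Hop]⟩
  | succ k ih =>
    obtain ⟨n, j, c, hjk, hc, hHop⟩ := ih
    have hdc : ∀ i, DifferentiableOn ℂ (deriv (c i)) U :=
      fun i => ((hc i).analyticOnNhd hU).deriv.differentiableOn
    have hdf : DifferentiableOn ℂ (deriv f) U := (hf.analyticOnNhd hU).deriv.differentiableOn
    refine ⟨n + n, Fin.append j (fun i => j i + 1),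
      Fin.append (fun i w => w * deriv (c i) w) (fun i w => w * (c i w * deriv f w)),
      Fin.addCases (fun i => by simpa using (hjk i).trans k.le_succ)
        (fun i => by rw [Fin.append_right]; exact Nat.succ_le_succ (hjk i)),
      Fin.addCases (fun i => by simpa using differentiableOn_id.fun_mul (hdc i))
        (fun i => by rw [Fin.append_right]; exact differentiableOn_id.fun_mul ((hc i).fun_mul hdf)),
      ?_⟩
    intro m z hz
    have hterm (i : Fin n) := hasDerivAt_descFactorial_mul_mul_pow
      ((hc i).differentiableAt (hU.mem_nhds hz)) (hf.differentiableAt (hU.mem_nhds hz)) m (j i)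
    have hderiv : deriv (Hop k (fun w => f w ^ m)) z
        = deriv (fun w => ∑ i, (m.descFactorial (j i) : ℂ) * c i w * f w ^ (m - j i)) z :=
      Filter.EventuallyEq.deriv_eq (Filter.eventually_of_mem (hU.mem_nhds hz) (hHop m))
    rw [Hop_succ_apply, hderiv, (HasDerivAt.fun_sum fun i _ => hterm i).deriv, Finset.mul_sum,
      Fin.sum_univ_add]
    simp only [Fin.append_left, Fin.append_right, mul_add, Finset.sum_add_distrib]
    congr 1 <;> exact Finset.sum_congr rfl fun i _ => by ring

lemma pow_sub_le_mul_zpow {a M : ℝ} (ha : 0 < a) (haM : a ≤ M) (hM : 1 ≤ M)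
    {j k m : ℕ} (hjk : j ≤ k) (hjm : j ≤ m) :
    a ^ (m - j) ≤ M ^ k * a ^ ((m : ℤ) - k) := by
  have hsplit : ((m - j : ℕ) : ℤ) = (k - j : ℕ) + ((m : ℤ) - k) := by omega
  rw [← zpow_natCast, hsplit, zpow_add₀ ha.ne', zpow_natCast]
  gcongr
  calc a ^ (k - j) ≤ M ^ (k - j) := by gcongr
    _ ≤ M ^ k := pow_le_pow_right₀ hM (k.sub_le j)

lemma descFactorial_mul_pow_le {a M : ℝ} (ha : 0 < a) (haM : a ≤ M) (hM : 1 ≤ M)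
    {j k m : ℕ} (hjk : j ≤ k) (hm : 1 ≤ m) :
    (m.descFactorial j : ℝ) * a ^ (m - j) ≤ M ^ k * (m : ℝ) ^ k * a ^ ((m : ℤ) - k) := by
  rcases lt_or_ge m j with hmj | hjm
  · rw [Nat.descFactorial_eq_zero_iff_lt.mpr hmj, Nat.cast_zero, zero_mul]
    have : 0 ≤ M := zero_le_one.trans hM
    positivity
  · have hdesc : (m.descFactorial j : ℝ) ≤ (m : ℝ) ^ k := by
      exact_mod_cast (m.descFactorial_le_pow j).trans (Nat.pow_le_pow_right hm hjk)
    calc (m.descFactorial j : ℝ) * a ^ (m - j)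
        ≤ (m : ℝ) ^ k * (M ^ k * a ^ ((m : ℤ) - k)) := by
          gcongr
          exact pow_sub_le_mul_zpow ha haM hM hjk hjm
      _ = M ^ k * (m : ℝ) ^ k * a ^ ((m : ℤ) - k) := by ring

theorem stmt12 (k : ℕ) (S : Set ℂ) (hS : IsCompact S) (U : Set ℂ) (hU : IsOpen U)
    (hSU : S ⊆ U) (f : ℂ → ℂ) (hf : DifferentiableOn ℂ f U) :
    ∃ C : ℝ, ∀ m : ℕ, 1 ≤ m → ∀ z ∈ S, f z ≠ 0 →
      ‖Hop k (fun w => f w ^ m) z‖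
        ≤ C * (m : ℝ) ^ k * ‖f z‖ ^ ((m : ℤ) - k) := by
  obtain ⟨n, j, c, hjk, hc, hHop⟩ := Hop_pow_eq_sum hU hf k
  obtain ⟨B, hB⟩ := hS.bddAbove_image
    (continuousOn_finsetSum _ fun i _ => ((hc i).continuousOn.mono hSU).norm)
  obtain ⟨M, hM⟩ := hS.bddAbove_image (hf.continuousOn.mono hSU).norm
  refine ⟨B * max 1 M ^ k, fun m hm z hz hfz => ?_⟩
  have hfM : ‖f z‖ ≤ max 1 M := (hM ⟨z, hz, rfl⟩).trans (le_max_right 1 M)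
  set X := max 1 M ^ k * (m : ℝ) ^ k * ‖f z‖ ^ ((m : ℤ) - k)
  have hterm (i : Fin n) : (m.descFactorial (j i) : ℝ) * ‖f z‖ ^ (m - j i) ≤ X :=
    descFactorial_mul_pow_le (norm_pos_iff.mpr hfz) hfM (le_max_left 1 M) (hjk i) hm
  rw [hHop m z (hSU hz)]
  calc ‖∑ i, (m.descFactorial (j i) : ℂ) * c i z * f z ^ (m - j i)‖
      ≤ ∑ i, ‖c i z‖ * ((m.descFactorial (j i) : ℝ) * ‖f z‖ ^ (m - j i)) := by
        refine (norm_sum_le _ _).trans_eq (Finset.sum_congr rfl fun i _ => ?_)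
        rw [norm_mul, norm_mul, norm_pow, Complex.norm_natCast]
        ring
    _ ≤ (∑ i, ‖c i z‖) * X := by
        rw [Finset.sum_mul]
        exact Finset.sum_le_sum fun i _ => mul_le_mul_of_nonneg_left (hterm i) (norm_nonneg _)
    _ ≤ B * X := mul_le_mul_of_nonneg_right (hB ⟨z, hz, rfl⟩) (by positivity)
    _ = B * max 1 M ^ k * (m : ℝ) ^ k * ‖f z‖ ^ ((m : ℤ) - k) := by ring
end

section
/- Let P(x,y) ∈ ℂ[x,y] be irreducible with deg_x P > 0 and deg_y P > 0. If the set {(α,β) ∈ ℂ² : |α| = 1, |β| = 1, and P(α,β) = 0} is infinite, then P⋆ = c·P for some constant c ∈ ℂ. -/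
/-!
On the unit torus `1 / conj α = α`, so the defining identity of the reciprocal polynomial shows
that `P⋆` vanishes wherever `P` does there; hence `P` and `P⋆` have infinitely many common zeros.
Viewing `P` as a polynomial in `x` over `ℂ[y]`, irreducibility and positive degree make
it primitive, so if `P ∤ P⋆` their resultant is a nonzero polynomial in `y` vanishing at every
common zero, while each fibre `P(·, β)` is a nonzero polynomial: finitely many common zeros.
So `P ∣ P⋆`, and as the partial degrees of `P⋆` are at most those of `P`, the quotient is a
constant.
-/

open scoped Polynomial.Bivariate

namespace Polynomial

theorem resultant_ne_zero_of_not_dvd {R : Type*} [CommRing R] [IsDomain R] [IsGCDMonoid R]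
    {p q : R[X]} (hp : p.IsPrimitive) (hirr : Irreducible p) (h : ¬p ∣ q) :
    resultant p q ≠ 0 := by
  let K := FractionRing R
  have hinj : Function.Injective (algebraMap R K) := IsFractionRing.injective R K
  have hcop : IsCoprime (p.map (algebraMap R K)) (q.map (algebraMap R K)) :=
    ((hp.irreducible_iff_irreducible_map_fraction_map).mp hirr).coprime_iff_not_dvd.mpr
      (mt (hp.dvd_iff_fraction_map_dvd_fraction_map K).mpr h)
  have := resultant_ne_zero _ _ hcop
  rwa [natDegree_map_eq_of_injective hinj, natDegree_map_eq_of_injective hinj,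
    resultant_map_map, ne_eq, map_eq_zero_iff _ hinj] at this

theorem IsPrimitive.map_evalRingHom_ne_zero {K : Type*} [Field K] {p : K[X][Y]}
    (hp : p.IsPrimitive) (x : K) : p.map (evalRingHom x) ≠ 0 := by
  intro h
  have hdvd : C (X - C x) ∣ p := by
    refine C_dvd_iff_dvd_coeff _ _ |>.mpr fun n => dvd_iff_isRoot.mpr ?_
    simpa [coeff_map] using congrArg (coeff · n) h
  exact not_isUnit_X_sub_C x (hp _ hdvd)

theorem dvd_of_infinite_setOf_evalEval_eq_zero {K : Type*} [Field K] {p q : K[X][Y]}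
    (hirr : Irreducible p) (hdeg : p.natDegree ≠ 0)
    (h : {z : K × K | p.evalEval z.1 z.2 = 0 ∧ q.evalEval z.1 z.2 = 0}.Infinite) : p ∣ q := by
  have hp := hirr.isPrimitive hdeg
  by_contra hpq
  obtain ⟨a, b, -, -, hab⟩ := exists_mul_add_mul_eq_C_resultant p q le_rfl le_rfl (.inl hdeg)
  refine h <| ((finite_setOfPred_isRoot (resultant_ne_zero_of_not_dvd hp hirr hpq)).biUnion
    fun x _ => (finite_setOfPred_isRoot (hp.map_evalRingHom_ne_zero x)).image (Prod.mk x)).subset ?_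
  rintro ⟨x, y⟩ ⟨hpz, hqz⟩
  have hres : (resultant p q).eval x = 0 := by
    have := congrArg (evalEval x y) hab
    rwa [evalEval_add, evalEval_mul, evalEval_mul, hpz, hqz, evalEval_C, zero_mul, zero_mul,
      add_zero, eq_comm] at this
  simp only [Set.mem_iUnion, Set.mem_image, Set.mem_ofPred_eq]
  exact ⟨x, hres, y, by rwa [IsRoot, map_evalRingHom_eval], rfl⟩

end Polynomial

namespace MvPolynomial

variable {R : Type*} [CommRing R]

/-- The variable `X 0` becomes the outer variable `Y` and `X 1` the inner variable `X`. -/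
noncomputable def finTwoEquivBivariate : MvPolynomial (Fin 2) R ≃ₐ[R] R[X][Y] :=
  (finSuccEquiv R 1).trans (Polynomial.mapAlgEquiv (uniqueAlgEquiv R (Fin 1)))

theorem natDegree_finTwoEquivBivariate (P : MvPolynomial (Fin 2) R) :
    (finTwoEquivBivariate P).natDegree = P.degreeOf 0 := by
  rw [finTwoEquivBivariate, AlgEquiv.trans_apply, Polynomial.coe_mapAlgEquiv,
    Polynomial.natDegree_map_eq_of_injective (uniqueAlgEquiv R (Fin 1)).injective,
    natDegree_finSuccEquiv]

theorem evalEval_finTwoEquivBivariate (P : MvPolynomial (Fin 2) R) (a b : R) :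
    (finTwoEquivBivariate P).evalEval b a = eval ![a, b] P := by
  show Polynomial.evalEvalRingHom b a ((finTwoEquivBivariate : _ ≃ₐ[R] _).toRingHom P) = _
  rw [← RingHom.comp_apply]
  congr 1
  refine ringHom_ext (fun r => ?_) (fun i => ?_)
  · simp [finTwoEquivBivariate, finSuccEquiv_apply]
  · fin_cases i
    · simp [finTwoEquivBivariate, finSuccEquiv_X_zero]
    · simp [finTwoEquivBivariate, show X (1 : Fin 2) = X (Fin.succ 0) from rfl,
        finSuccEquiv_X_succ]

theorem dvd_of_infinite_setOf_eval_eq_zero {K : Type*} [Field K] {P Q : MvPolynomial (Fin 2) K}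
    (hirr : Irreducible P) (hdeg : P.degreeOf 0 ≠ 0)
    (h : {z : K × K | eval ![z.1, z.2] P = 0 ∧ eval ![z.1, z.2] Q = 0}.Infinite) : P ∣ Q := by
  rw [← map_dvd_iff finTwoEquivBivariate]
  refine Polynomial.dvd_of_infinite_setOf_evalEval_eq_zero (hirr.map _)
    (by rwa [natDegree_finTwoEquivBivariate]) fun hfin => h ?_
  simpa only [Set.preimage, Set.mem_ofPred_eq, Prod.fst_swap, Prod.snd_swap,
    evalEval_finTwoEquivBivariate] using hfin.preimage Prod.swap_injective.injOn

section Reciprocal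

variable {σ : Type*} [DecidableEq σ]

/-- `Multiset.toFinsupp P.degrees` is the exponent vector `i ↦ degreeOf i P`. -/
noncomputable def reciprocal [StarRing R] (P : MvPolynomial σ R) : MvPolynomial σ R :=
  ∑ m ∈ P.support, monomial (Multiset.toFinsupp P.degrees - m) (starRingEnd R (P.coeff m))

theorem degrees_reciprocal_le [StarRing R] (P : MvPolynomial σ R) :
    P.reciprocal.degrees ≤ P.degrees := by
  refine Multiset.le_iff_count.mpr fun i => ?_
  rw [← degreeOf_def, ← degreeOf_def, degreeOf_le_iff]
  intro m hm
  obtain ⟨m', -, hm'⟩ := Finset.mem_biUnion.mp (support_sum hm)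
  rw [Finset.mem_singleton.mp (support_monomial_subset hm'), Finsupp.tsub_apply,
    Multiset.toFinsupp_apply, ← degreeOf_def]
  exact Nat.sub_le _ _

theorem eval_reciprocal {K : Type*} [Field K] [StarRing K] [Fintype σ] (P : MvPolynomial σ K)
    {x : σ → K} (hx : ∀ i, x i ≠ 0) :
    eval x P.reciprocal =
      (∏ i, x i ^ P.degreeOf i) * starRingEnd K (eval (fun i => (starRingEnd K (x i))⁻¹) P) := by
  rw [reciprocal, map_sum, eval_eq', map_sum, Finset.mul_sum]
  refine Finset.sum_congr rfl fun m hm => ?_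
  have hle : ∀ i, m i ≤ P.degreeOf i := fun i => degreeOf_le_iff.mp le_rfl m hm
  simp only [eval_monomial, Finsupp.prod_fintype _ _ (fun i => pow_zero (x i)), Finsupp.tsub_apply,
    Multiset.toFinsupp_apply, ← degreeOf_def, map_mul, map_prod, map_pow, map_inv₀,
    starRingEnd_self_apply, inv_pow, Finset.prod_congr rfl fun i _ => pow_sub₀ _ (hx i) (hle i),
    Finset.prod_mul_distrib]
  ring

theorem eval_reciprocal_eq_zero {𝕜 : Type*} [RCLike 𝕜] [Fintype σ] {P : MvPolynomial σ 𝕜}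
    {x : σ → 𝕜} (hx : ∀ i, ‖x i‖ = 1) (hP : eval x P = 0) : eval x P.reciprocal = 0 := by
  have hx0 : ∀ i, x i ≠ 0 := fun i h => by simpa [h] using hx i
  have hinv : (fun i => (starRingEnd 𝕜 (x i))⁻¹) = x :=
    _root_.funext fun i => by rw [← RCLike.inv_eq_conj (hx i), inv_inv]
  rw [eval_reciprocal P hx0, hinv, hP, map_zero, mul_zero]

end Reciprocal

theorem exists_eq_C_mul_of_dvd_of_degrees_le {σ : Type*} [IsDomain R] {P Q : MvPolynomial σ R}
    (hP : P ≠ 0) (hdvd : P ∣ Q) (hdeg : Q.degrees ≤ P.degrees) : ∃ c, Q = C c * P := by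
  classical
  obtain ⟨t, rfl⟩ := hdvd
  refine ⟨t.coeff 0, ?_⟩
  suffices t.vars = ∅ by
    conv_lhs => rw [vars_eq_empty_iff_eq_C.mp this]
    exact mul_comm _ _
  rcases eq_or_ne t 0 with rfl | ht
  · simp
  have ht0 : t.degrees = 0 := by simpa [degrees_mul_eq hP ht] using hdeg
  rw [vars_def, ht0, Multiset.toFinset_zero]

end MvPolynomial

open MvPolynomial

theorem stmt15_general (P : MvPolynomial (Fin 2) ℂ) (hirr : Irreducible P)
    (hdx : 0 < P.degreeOf 0)
    (hinf : {p : ℂ × ℂ | ‖p.1‖ = 1 ∧ ‖p.2‖ = 1 ∧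
      MvPolynomial.eval ![p.1, p.2] P = 0}.Infinite) :
    -- `P⋆ = c·P`, expressed through the defining property of the reciprocal polynomial
    ∃ c : ℂ, ∀ x y : ℂ, x ≠ 0 → y ≠ 0 →
      x ^ P.degreeOf 0 * y ^ P.degreeOf 1 *
        (starRingEnd ℂ)
          (MvPolynomial.eval ![1 / (starRingEnd ℂ) x, 1 / (starRingEnd ℂ) y] P)
        = c * MvPolynomial.eval ![x, y] P := by
  have hdvd : P ∣ P.reciprocal := by
    refine dvd_of_infinite_setOf_eval_eq_zero hirr hdx.ne' (hinf.mono ?_)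
    rintro z ⟨h1, h2, hz⟩
    exact ⟨hz, eval_reciprocal_eq_zero (Fin.forall_fin_two.mpr ⟨h1, h2⟩) hz⟩
  obtain ⟨c, hc⟩ := exists_eq_C_mul_of_dvd_of_degrees_le hirr.ne_zero hdvd (degrees_reciprocal_le P)
  refine ⟨c, fun x y hx hy => ?_⟩
  have h := eval_reciprocal P (x := ![x, y]) (Fin.forall_fin_two.mpr ⟨hx, hy⟩)
  have hpt : (fun i => (starRingEnd ℂ (![x, y] i))⁻¹) =
      ![1 / starRingEnd ℂ x, 1 / starRingEnd ℂ y] :=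
    funext <| Fin.forall_fin_two.mpr ⟨inv_eq_one_div _, inv_eq_one_div _⟩
  rw [hc, eval_mul, eval_C, Fin.prod_univ_two, hpt] at h
  exact h.symm

theorem stmt15 (P : MvPolynomial (Fin 2) ℂ) (hirr : Irreducible P)
    (hdx : 0 < P.degreeOf 0) (hdy : 0 < P.degreeOf 1)
    (hinf : {p : ℂ × ℂ | ‖p.1‖ = 1 ∧ ‖p.2‖ = 1 ∧
      MvPolynomial.eval ![p.1, p.2] P = 0}.Infinite) :
    -- `P⋆ = c·P`, expressed through the defining property of the reciprocal polynomial
    ∃ c : ℂ, ∀ x y : ℂ, x ≠ 0 → y ≠ 0 →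
      x ^ P.degreeOf 0 * y ^ P.degreeOf 1 *
        (starRingEnd ℂ)
          (MvPolynomial.eval ![1 / (starRingEnd ℂ) x, 1 / (starRingEnd ℂ) y] P)
        = c * MvPolynomial.eval ![x, y] P :=
  stmt15_general P hirr hdx hinf
end

section
/- Let P(x,y) ∈ ℂ[x,y] be irreducible with deg_x P > 0 and deg_y P > 0, and suppose P⋆ = c·P for some constant c ∈ ℂ. Write P(x,y) = ∑_{j=0}^{d} a_j(x)·yʲ with a_j(x) ∈ ℂ[x] and d = deg_y P. Let U ⊆ ℂ∖{0} be a connected open set with 1/conj(z) ∈ U whenever z ∈ U, such that for every x ∈ U: a_d(x) ≠ 0 and there is no y ∈ ℂ with P(x,y) = 0 and (∂P/∂y)(x,y) = 0. Let ρ : U → ℂ be holomorphic with P(x, ρ(x)) = 0 for all x ∈ U. If |ρ(α)| = 1 for some α ∈ U with |α| = 1, then |ρ(x)| = 1 for every x ∈ U with |x| = 1. -/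
/-!
Comparing the coefficients of `y⁰` in `P⋆ = c • P` gives
`c · a₀(x) = x^{d₁} · conj (a_d (1 / conj x))`, so `c ≠ 0` and `ρ` has no zero on `U`.
Therefore `σ(x) = 1 / conj (ρ (1 / conj x))` is a second continuous root of `P(x, ·)` on `U`,
and `σ(α) = ρ(α)`. Two continuous roots through a simple root agree nearby (the divided
difference `(P(x,y) - P(x,z)) / (y - z)` is `∂P/∂y ≠ 0` on the diagonal), so `ρ = σ` on the
connected set `U`; on the unit circle this says `ρ(x) = 1 / conj (ρ x)`, i.e. `|ρ(x)| = 1`.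
-/

/-- Evaluation of a bivariate polynomial `P ∈ (ℂ[x])[y]` at the point `(x, y)`. -/
noncomputable def ev (P : Polynomial (Polynomial ℂ)) (x y : ℂ) : ℂ :=
  Polynomial.eval₂ (Polynomial.evalRingHom x) y P

/-- The degree of `P ∈ (ℂ[x])[y]` in the variable `x`. -/
noncomputable def degX (P : Polynomial (Polynomial ℂ)) : ℕ :=
  P.support.sup fun j => (P.coeff j).natDegree

open Polynomial ComplexConjugate Filter Topology Set

theorem IsPreconnected.eqOn_of_eventuallyEq {X Y : Type*} [TopologicalSpace X]
    [TopologicalSpace Y] [T2Space Y] {s : Set X} (hs : IsPreconnected s) {f g : X → Y}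
    (hf : ContinuousOn f s) (hg : ContinuousOn g s)
    (hloc : ∀ x ∈ s, f x = g x → ∀ᶠ y in 𝓝[s] x, f y = g y)
    {a : X} (ha : a ∈ s) (hfga : f a = g a) : EqOn f g s := by
  intro b hb
  refine (hs.induction₂' (fun x y => f x = g x ↔ f y = g y) (fun x hx => ?_)
    (fun _ _ _ _ _ _ hxy hyz => hxy.trans hyz) ha hb).1 hfga
  by_cases hfgx : f x = g x
  · filter_upwards [hloc x hx hfgx] with y hy
    simp [hfgx, hy]
  · have hne : ∀ᶠ y in 𝓝[s] x, f y ≠ g y := ((hf x hx).prodMk (hg x hx)).eventually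
      ((isOpen_ne_fun continuous_fst continuous_snd).mem_nhds hfgx)
    filter_upwards [hne] with y hy
    simp [hfgx, hy]

noncomputable def invConj (z : ℂ) : ℂ := 1 / conj z

theorem invConj_invConj (z : ℂ) : invConj (invConj z) = z := by
  simp [invConj]

theorem invConj_ne_zero {z : ℂ} (hz : z ≠ 0) : invConj z ≠ 0 := by
  simpa [invConj] using hz

theorem invConj_of_norm_eq_one {z : ℂ} (hz : ‖z‖ = 1) : invConj z = z := by
  rw [invConj, ← Complex.inv_eq_conj hz, one_div, inv_inv]

theorem norm_eq_one_of_invConj_eq {z : ℂ} (hz : z ≠ 0) (h : invConj z = z) : ‖z‖ = 1 := by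
  have hsq : ((‖z‖ ^ 2 : ℝ) : ℂ) = 1 := by
    rw [Complex.ofReal_pow, ← Complex.mul_conj']
    nth_rw 1 [← h]
    exact one_div_mul_cancel ((_root_.map_ne_zero _).mpr hz)
  exact (pow_eq_one_iff_of_nonneg (norm_nonneg z) two_ne_zero).mp (mod_cast hsq)

theorem continuousOn_invConj : ContinuousOn invConj {0}ᶜ := by
  unfold invConj
  simp only [one_div]
  exact Complex.continuous_conj.continuousOn.inv₀ fun z hz => (_root_.map_ne_zero _).mpr hz

theorem ev_eq_sum (P : ℂ[X][X]) (x y : ℂ) :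
    ev P x y = ∑ j ∈ P.support, (P.coeff j).eval x * y ^ j := by
  rw [ev, eval₂_eq_sum, Polynomial.sum_def]
  rfl

theorem ev_zero_right (P : ℂ[X][X]) (x : ℂ) : ev P x 0 = (P.coeff 0).eval x :=
  eval₂_at_zero ..

theorem continuous_ev_right (P : ℂ[X][X]) (x : ℂ) : Continuous (ev P x) := by
  have : ev P x = fun y => (P.map (evalRingHom x)).eval y := funext fun y => (eval_map ..).symm
  exact this ▸ (P.map (evalRingHom x)).continuous

/-- `(P(x,y) - P(x,z)) / (y - z)`, written as a polynomial in `y` and `z`. -/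
noncomputable def divDiff (P : ℂ[X][X]) (x y z : ℂ) : ℂ :=
  ∑ j ∈ P.support, (P.coeff j).eval x * ∑ i ∈ Finset.range j, y ^ i * z ^ (j - 1 - i)

theorem sub_mul_divDiff (P : ℂ[X][X]) (x y z : ℂ) :
    (y - z) * divDiff P x y z = ev P x y - ev P x z := by
  rw [divDiff, ev_eq_sum, ev_eq_sum, ← Finset.sum_sub_distrib, Finset.mul_sum]
  refine Finset.sum_congr rfl fun j _ => ?_
  linear_combination (P.coeff j).eval x * geom_sum₂_mul y z j

theorem divDiff_self (P : ℂ[X][X]) (x y : ℂ) : divDiff P x y y = ev (derivative P) x y := by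
  rw [ev, derivative_apply, Polynomial.sum_def, eval₂_finsetSum, divDiff]
  refine Finset.sum_congr rfl fun j _ => ?_
  simp only [geom_sum₂_self, eval₂_mul, eval₂_C, eval₂_X_pow, map_mul, map_natCast,
    coe_evalRingHom, eval₂_natCast]
  ring

theorem ContinuousAt.divDiff (P : ℂ[X][X]) {f g : ℂ → ℂ} {x₀ : ℂ} (hf : ContinuousAt f x₀)
    (hg : ContinuousAt g x₀) : ContinuousAt (fun x => divDiff P x (f x) (g x)) x₀ := by
  unfold _root_.divDiff
  fun_prop

theorem eventuallyEq_of_simple_root (P : ℂ[X][X]) {f g : ℂ → ℂ} {x₀ : ℂ}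
    (hf : ContinuousAt f x₀) (hg : ContinuousAt g x₀)
    (hfP : ∀ᶠ x in 𝓝 x₀, ev P x (f x) = 0) (hgP : ∀ᶠ x in 𝓝 x₀, ev P x (g x) = 0)
    (hfg : f x₀ = g x₀) (hsimple : ev (derivative P) x₀ (f x₀) ≠ 0) : f =ᶠ[𝓝 x₀] g := by
  have hne : divDiff P x₀ (f x₀) (g x₀) ≠ 0 := by rwa [← hfg, divDiff_self]
  filter_upwards [(hf.divDiff P hg).eventually_ne hne, hfP, hgP] with x hx hfx hgx
  have hmul : (f x - g x) * divDiff P x (f x) (g x) = 0 := by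
    rw [sub_mul_divDiff, hfx, hgx, sub_zero]
  exact sub_eq_zero.mp ((mul_eq_zero.mp hmul).resolve_right hx)

/-- `P⋆ = c • P`. -/
def IsSelfReciprocal (P : ℂ[X][X]) (c : ℂ) : Prop :=
  ∀ x y : ℂ, x ≠ 0 → y ≠ 0 →
    x ^ degX P * y ^ P.natDegree * conj (ev P (invConj x) (invConj y)) = c * ev P x y

theorem pow_mul_conj_ev_invConj (P : ℂ[X][X]) (x : ℂ) {y : ℂ} (hy : y ≠ 0) :
    y ^ P.natDegree * conj (ev P x (invConj y)) =
      ∑ j ∈ P.support, conj ((P.coeff j).eval x) * y ^ (P.natDegree - j) := by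
  rw [ev_eq_sum, map_sum, Finset.mul_sum]
  refine Finset.sum_congr rfl fun j hj => ?_
  rw [pow_sub₀ y hy (le_natDegree_of_mem_supp j hj)]
  simp only [invConj, map_mul, map_pow, map_div₀, map_one, Complex.conj_conj]
  ring

namespace IsSelfReciprocal

variable {P : ℂ[X][X]} {c : ℂ}

theorem mul_eval_coeff_zero (hc : IsSelfReciprocal P c) {x : ℂ} (hx : x ≠ 0) :
    c * (P.coeff 0).eval x = x ^ degX P * conj (P.leadingCoeff.eval (invConj x)) := by
  set g : ℂ → ℂ := fun y => x ^ degX P *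
    ∑ j ∈ P.support, conj ((P.coeff j).eval (invConj x)) * y ^ (P.natDegree - j)
  have hg : (fun y => c * ev P x y) = g := by
    refine Continuous.ext_on (dense_compl_singleton 0)
      (continuous_const.mul (continuous_ev_right P x)) (by fun_prop) fun y hy => ?_
    rw [← hc x y hx hy, mul_assoc, pow_mul_conj_ev_invConj P _ hy]
  rw [← ev_zero_right, congrFun hg 0]
  dsimp only [g]
  congr 1
  refine (Finset.sum_eq_single P.natDegree (fun j hj hne => ?_) fun hd => ?_).trans (by simp)
  · rw [zero_pow (Nat.sub_ne_zero_of_lt ((le_natDegree_of_mem_supp j hj).lt_of_ne hne)), mul_zero]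
  · rw [notMem_support_iff.mp hd]
    simp

theorem ev_eq_zero_of_invConj (hc : IsSelfReciprocal P c) (hc0 : c ≠ 0) {x y : ℂ} (hx : x ≠ 0)
    (hy : y ≠ 0) (h : ev P (invConj x) y = 0) : ev P x (invConj y) = 0 := by
  have := hc x (invConj y) hx (invConj_ne_zero hy)
  rw [invConj_invConj, h, map_zero, mul_zero] at this
  exact (mul_eq_zero.mp this.symm).resolve_left hc0

end IsSelfReciprocal

theorem stmt16_general (P : Polynomial (Polynomial ℂ))
    -- `P⋆ = c·P`, expressed through the defining property of the reciprocal polynomial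
    (hrec : ∃ c : ℂ, ∀ x y : ℂ, x ≠ 0 → y ≠ 0 →
      x ^ degX P * y ^ P.natDegree *
        (starRingEnd ℂ) (ev P (1 / (starRingEnd ℂ) x) (1 / (starRingEnd ℂ) y))
        = c * ev P x y)
    (U : Set ℂ) (hUopen : IsOpen U) (hUconn : IsConnected U)
    (hU0 : ∀ z ∈ U, z ≠ 0)
    (hUinv : ∀ z ∈ U, 1 / (starRingEnd ℂ) z ∈ U)
    (hlead : ∀ x ∈ U, Polynomial.eval x P.leadingCoeff ≠ 0)
    (hcrit : ∀ x ∈ U, ¬∃ y : ℂ, ev P x y = 0 ∧ ev (Polynomial.derivative P) x y = 0)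
    (ρ : ℂ → ℂ) (hρhol : DifferentiableOn ℂ ρ U)
    (hρ : ∀ x ∈ U, ev P x (ρ x) = 0)
    (α : ℂ) (hα : α ∈ U) (hα1 : ‖α‖ = 1) (hρα : ‖ρ α‖ = 1) :
    ∀ x ∈ U, ‖x‖ = 1 → ‖ρ x‖ = 1 := by
  obtain ⟨c, hc⟩ := hrec
  replace hc : IsSelfReciprocal P c := hc
  have hcoeff : ∀ x ∈ U, c * (P.coeff 0).eval x ≠ 0 := fun x hx => by
    rw [hc.mul_eval_coeff_zero (hU0 x hx)]
    exact mul_ne_zero (pow_ne_zero _ (hU0 x hx))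
      ((_root_.map_ne_zero _).mpr (hlead _ (hUinv x hx)))
  have hc0 : c ≠ 0 := left_ne_zero_of_mul (hcoeff α hα)
  have hρ0 : ∀ x ∈ U, ρ x ≠ 0 := fun x hx h0 =>
    right_ne_zero_of_mul (hcoeff x hx) (by simpa only [h0, ev_zero_right] using hρ x hx)
  set σ : ℂ → ℂ := fun x => invConj (ρ (invConj x))
  have hσ : ∀ x ∈ U, ev P x (σ x) = 0 := fun x hx =>
    hc.ev_eq_zero_of_invConj hc0 (hU0 x hx) (hρ0 _ (hUinv x hx)) (hρ _ (hUinv x hx))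
  have hρc : ContinuousOn ρ U := hρhol.continuousOn
  have hσc : ContinuousOn σ U := continuousOn_invConj.comp
    (hρc.comp (continuousOn_invConj.mono hU0) hUinv) fun x hx => hρ0 _ (hUinv x hx)
  have hρσ : EqOn ρ σ U := by
    refine hUconn.isPreconnected.eqOn_of_eventuallyEq hρc hσc (fun x hx hρσx => ?_) hα ?_
    · have hxU := hUopen.mem_nhds hx
      refine Filter.Eventually.filter_mono nhdsWithin_le_nhds (eventuallyEq_of_simple_root P
        (hρc.continuousAt hxU) (hσc.continuousAt hxU) (eventually_of_mem hxU hρ)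
        (eventually_of_mem hxU hσ) hρσx fun h => hcrit x hx ⟨ρ x, hρ x hx, h⟩)
    · simp only [σ, invConj_of_norm_eq_one hα1, invConj_of_norm_eq_one hρα]
  intro x hx hx1
  refine norm_eq_one_of_invConj_eq (hρ0 x hx) ?_
  simpa only [σ, invConj_of_norm_eq_one hx1] using (hρσ hx).symm

theorem stmt16 (P : Polynomial (Polynomial ℂ)) (hirr : Irreducible P)
    (hdx : 0 < degX P) (hdy : 0 < P.natDegree)
    -- `P⋆ = c·P`, expressed through the defining property of the reciprocal polynomial
    (hrec : ∃ c : ℂ, ∀ x y : ℂ, x ≠ 0 → y ≠ 0 →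
      x ^ degX P * y ^ P.natDegree *
        (starRingEnd ℂ) (ev P (1 / (starRingEnd ℂ) x) (1 / (starRingEnd ℂ) y))
        = c * ev P x y)
    (U : Set ℂ) (hUopen : IsOpen U) (hUconn : IsConnected U)
    (hU0 : ∀ z ∈ U, z ≠ 0)
    (hUinv : ∀ z ∈ U, 1 / (starRingEnd ℂ) z ∈ U)
    (hlead : ∀ x ∈ U, Polynomial.eval x P.leadingCoeff ≠ 0)
    (hcrit : ∀ x ∈ U, ¬∃ y : ℂ, ev P x y = 0 ∧ ev (Polynomial.derivative P) x y = 0)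
    (ρ : ℂ → ℂ) (hρhol : DifferentiableOn ℂ ρ U)
    (hρ : ∀ x ∈ U, ev P x (ρ x) = 0)
    (α : ℂ) (hα : α ∈ U) (hα1 : ‖α‖ = 1) (hρα : ‖ρ α‖ = 1) :
    ∀ x ∈ U, ‖x‖ = 1 → ‖ρ x‖ = 1 :=
  stmt16_general P hrec U hUopen hUconn hU0 hUinv hlead hcrit ρ hρhol hρ α hα hα1 hρα
end
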